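/- arXiv:1511.08950 — 5 statements merged into one kernel-verified Lean document; each statement's English description precedes it below -/
import Mathlib

section
/- With $K_{ji}$ as in the block Jacobi setting, one has $K_{n+3,n} = -B_{n+2}^{-1} B_{n+1}^* B_n^{-1} + B_{n+2}^{-1} A_{n+2} B_{n+1}^{-1} A_{n+1} B_n^{-1}$ for all $n\ge 0$. -/
open Matrix Finset


/-- Explicit formula for K_{n+3,n}. -/
theorem kernel_third_diagonal
    (m : ℕ) (hm : 1 ≤ m)
    (A B : ℕ → Matrix (Fin m) (Fin m) ℂ)
    (hA : ∀ j, (A j).IsHermitian)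
    (hB : ∀ j, IsUnit (B j))
    (P Q : ℕ → ℂ → Matrix (Fin m) (Fin m) ℂ)
    (hP0 : ∀ z, P 0 z = 1)
    (hP1 : ∀ z, P 1 z = (B 0)⁻¹ * (z • (1 : Matrix (Fin m) (Fin m) ℂ) - A 0))
    (hQ0 : ∀ z, Q 0 z = 0)
    (hQ1 : ∀ z, Q 1 z = (B 0)⁻¹)
    (hPrec : ∀ j : ℕ, ∀ z : ℂ,
      (B j)ᴴ * P j z + A (j + 1) * P (j + 1) z + B (j + 1) * P (j + 2) z
        = z • P (j + 1) z)
    (hQrec : ∀ j : ℕ, ∀ z : ℂ,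
      (B j)ᴴ * Q j z + A (j + 1) * Q (j + 1) z + B (j + 1) * Q (j + 2) z
        = z • Q (j + 1) z)
    (K : ℕ → ℕ → Matrix (Fin m) (Fin m) ℂ)
    (hK : ∀ j i, K j i = Q j 0 * (P i 0)ᴴ - P j 0 * (Q i 0)ᴴ) :
    ∀ n : ℕ, K (n + 3) n
      = -((B (n + 2))⁻¹ * (B (n + 1))ᴴ * (B n)⁻¹)
        + (B (n + 2))⁻¹ * A (n + 2) * (B (n + 1))⁻¹ * A (n + 1) * (B n)⁻¹ := by
  have hdet : ∀ j, IsUnit (B j).det := fun j => (Matrix.isUnit_iff_isUnit_det _).mp (hB j)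
  have hdetH : ∀ j, IsUnit ((B j)ᴴ).det := fun j => by
    rw [Matrix.det_conjTranspose]; exact (hdet j).star
  have hBi : ∀ j, (B j)⁻¹ * B j = 1 := fun j => Matrix.nonsing_inv_mul _ (hdet j)
  have hBH : ∀ j, (B j)ᴴ * ((B j)ᴴ)⁻¹ = 1 := fun j => Matrix.mul_nonsing_inv _ (hdetH j)
  have recP : ∀ j, P (j+2) 0 = -((B (j+1))⁻¹ * ((B j)ᴴ * P j 0 + A (j+1) * P (j+1) 0)) := by
    intro j
    have h := hPrec j 0
    rw [zero_smul] at h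
    have h2 : B (j+1) * P (j+2) 0 = -((B j)ᴴ * P j 0 + A (j+1) * P (j+1) 0) :=
      eq_neg_of_add_eq_zero_right h
    calc P (j+2) 0 = (B (j+1))⁻¹ * (B (j+1) * P (j+2) 0) := by
          rw [← Matrix.mul_assoc, hBi, Matrix.one_mul]
      _ = _ := by rw [h2, Matrix.mul_neg]
  have recQ : ∀ j, Q (j+2) 0 = -((B (j+1))⁻¹ * ((B j)ᴴ * Q j 0 + A (j+1) * Q (j+1) 0)) := by
    intro j
    have h := hQrec j 0
    rw [zero_smul] at h
    have h2 : B (j+1) * Q (j+2) 0 = -((B j)ᴴ * Q j 0 + A (j+1) * Q (j+1) 0) :=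
      eq_neg_of_add_eq_zero_right h
    calc Q (j+2) 0 = (B (j+1))⁻¹ * (B (j+1) * Q (j+2) 0) := by
          rw [← Matrix.mul_assoc, hBi, Matrix.one_mul]
      _ = _ := by rw [h2, Matrix.mul_neg]
  have recK : ∀ j i, K (j+2) i = -((B (j+1))⁻¹ * ((B j)ᴴ * K j i + A (j+1) * K (j+1) i)) := by
    intro j i
    rw [hK, hK, hK, recP j, recQ j]
    noncomm_ring
  have skew : ∀ j i, K i j = -(K j i)ᴴ := by
    intro j i
    rw [hK, hK]
    simp [Matrix.conjTranspose_sub, Matrix.conjTranspose_mul, neg_sub]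
  have key : ∀ n, K n n = 0 ∧ K (n+1) (n+1) = 0 ∧ K (n+1) n = (B n)⁻¹ := by
    intro n
    induction n with
    | zero =>
      refine ⟨by rw [hK, hQ0, hP0]; simp, ?_, by rw [hK 1 0, hQ1, hP0, hQ0]; simp⟩
      rw [hK, hQ1, hP1]
      simp [zero_smul, zero_sub, Matrix.conjTranspose_mul, Matrix.conjTranspose_neg,
        Matrix.conjTranspose_nonsing_inv, (hA 0).eq, Matrix.mul_neg, Matrix.neg_mul,
        Matrix.mul_assoc]
    | succ n ih =>
      obtain ⟨h0, h1, h2⟩ := ih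
      have hK20 : K (n+2) n = -((B (n+1))⁻¹ * A (n+1) * (B n)⁻¹) := by
        rw [recK n n, h0, h2]
        simp [Matrix.mul_assoc]
      have hK01 : K n (n+1) = -((B n)ᴴ)⁻¹ := by
        rw [skew, h2, Matrix.conjTranspose_nonsing_inv]
      have hK21 : K (n+2) (n+1) = (B (n+1))⁻¹ := by
        rw [recK n (n+1), hK01, h1]
        simp [Matrix.mul_neg, hBH n]
      have hK02 : K n (n+2) = ((B n)ᴴ)⁻¹ * A (n+1) * ((B (n+1))ᴴ)⁻¹ := by
        rw [skew, hK20]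
        simp [Matrix.conjTranspose_mul, Matrix.conjTranspose_nonsing_inv, (hA (n+1)).eq,
          Matrix.mul_assoc]
      have hK12 : K (n+1) (n+2) = -((B (n+1))ᴴ)⁻¹ := by
        rw [skew, hK21, Matrix.conjTranspose_nonsing_inv]
      refine ⟨h1, ?_, hK21⟩
      rw [recK n (n+2), hK02, hK12]
      rw [Matrix.mul_neg, ← Matrix.mul_assoc ((B n)ᴴ), ← Matrix.mul_assoc ((B n)ᴴ),
        hBH n, Matrix.one_mul]
      simp [Matrix.mul_assoc]
  intro n
  obtain ⟨h0, _, h2⟩ := key n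
  have hK20 : K (n+2) n = -((B (n+1))⁻¹ * A (n+1) * (B n)⁻¹) := by
    rw [recK n n, h0, h2]
    simp [Matrix.mul_assoc]
  rw [recK (n+1) n, h2, hK20]
  noncomm_ring
end

section
/- With $K_{ji}$ as in the block Jacobi setting, for all $n\ge 0$: $K_{n+4,n} = B_{n+3}^{-1} B_{n+2}^* B_{n+1}^{-1} A_{n+1} B_n^{-1} + B_{n+3}^{-1} A_{n+3} B_{n+2}^{-1} B_{n+1}^* B_n^{-1} - B_{n+3}^{-1} A_{n+3} B_{n+2}^{-1} A_{n+2} B_{n+1}^{-1} A_{n+1} B_n^{-1}$. -/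
open Matrix Finset


/-- Explicit formula for K_{n+4,n}. -/
theorem kernel_fourth_diagonal
    (m : ℕ) (hm : 1 ≤ m)
    (A B : ℕ → Matrix (Fin m) (Fin m) ℂ)
    (hA : ∀ j, (A j).IsHermitian)
    (hB : ∀ j, IsUnit (B j))
    (P Q : ℕ → ℂ → Matrix (Fin m) (Fin m) ℂ)
    (hP0 : ∀ z, P 0 z = 1)
    (hP1 : ∀ z, P 1 z = (B 0)⁻¹ * (z • (1 : Matrix (Fin m) (Fin m) ℂ) - A 0))
    (hQ0 : ∀ z, Q 0 z = 0)
    (hQ1 : ∀ z, Q 1 z = (B 0)⁻¹)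
    (hPrec : ∀ j : ℕ, ∀ z : ℂ,
      (B j)ᴴ * P j z + A (j + 1) * P (j + 1) z + B (j + 1) * P (j + 2) z
        = z • P (j + 1) z)
    (hQrec : ∀ j : ℕ, ∀ z : ℂ,
      (B j)ᴴ * Q j z + A (j + 1) * Q (j + 1) z + B (j + 1) * Q (j + 2) z
        = z • Q (j + 1) z)
    (K : ℕ → ℕ → Matrix (Fin m) (Fin m) ℂ)
    (hK : ∀ j i, K j i = Q j 0 * (P i 0)ᴴ - P j 0 * (Q i 0)ᴴ) :
    ∀ n : ℕ, K (n + 4) n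
      = (B (n + 3))⁻¹ * (B (n + 2))ᴴ * (B (n + 1))⁻¹ * A (n + 1) * (B n)⁻¹
        + (B (n + 3))⁻¹ * A (n + 3) * (B (n + 2))⁻¹ * (B (n + 1))ᴴ * (B n)⁻¹
        - (B (n + 3))⁻¹ * A (n + 3) * (B (n + 2))⁻¹ * A (n + 2) * (B (n + 1))⁻¹
            * A (n + 1) * (B n)⁻¹ := by
  have hdet : ∀ j, IsUnit (B j).det := fun j => (Matrix.isUnit_iff_isUnit_det (B j)).mp (hB j)
  have hBi : ∀ j, (B j)⁻¹ * B j = 1 := fun j => Matrix.nonsing_inv_mul _ (hdet j)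
  have hiB : ∀ j, B j * (B j)⁻¹ = 1 := fun j => Matrix.mul_nonsing_inv _ (hdet j)
  have hiBH : ∀ j, (B j)ᴴ * ((B j)ᴴ)⁻¹ = 1 := by
    intro j
    rw [← Matrix.conjTranspose_nonsing_inv, ← conjTranspose_mul, hBi j, conjTranspose_one]
  have hBHi : ∀ j, ((B j)ᴴ)⁻¹ * (B j)ᴴ = 1 := by
    intro j
    rw [← Matrix.conjTranspose_nonsing_inv, ← conjTranspose_mul, hiB j, conjTranspose_one]
  set p : ℕ → Matrix (Fin m) (Fin m) ℂ := fun j => P j 0 with hp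
  set q : ℕ → Matrix (Fin m) (Fin m) ℂ := fun j => Q j 0 with hq
  have hprec : ∀ j, B (j+1) * p (j+2) = -((B j)ᴴ * p j) - A (j+1) * p (j+1) := by
    intro j
    have h := hPrec j 0
    rw [zero_smul] at h
    calc B (j+1) * p (j+2)
        = ((B j)ᴴ * p j + A (j+1) * p (j+1) + B (j+1) * p (j+2))
            - (B j)ᴴ * p j - A (j+1) * p (j+1) := by abel
      _ = -((B j)ᴴ * p j) - A (j+1) * p (j+1) := by rw [h]; abel
  have hqrec : ∀ j, B (j+1) * q (j+2) = -((B j)ᴴ * q j) - A (j+1) * q (j+1) := by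
    intro j
    have h := hQrec j 0
    rw [zero_smul] at h
    calc B (j+1) * q (j+2)
        = ((B j)ᴴ * q j + A (j+1) * q (j+1) + B (j+1) * q (j+2))
            - (B j)ᴴ * q j - A (j+1) * q (j+1) := by abel
      _ = -((B j)ᴴ * q j) - A (j+1) * q (j+1) := by rw [h]; abel
  -- the main invariant
  have main : ∀ n : ℕ,
      (q n * (p n)ᴴ - p n * (q n)ᴴ = 0) ∧
      (q (n+1) * (p (n+1))ᴴ - p (n+1) * (q (n+1))ᴴ = 0) ∧
      (q (n+1) * (p n)ᴴ - p (n+1) * (q n)ᴴ = (B n)⁻¹) := by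
    intro n
    induction n with
    | zero =>
      have hp0 : p 0 = 1 := hP0 0
      have hq0 : q 0 = 0 := hQ0 0
      have hp1 : p 1 = -((B 0)⁻¹ * A 0) := by
        show P 1 0 = _
        rw [hP1 0, zero_smul, zero_sub, Matrix.mul_neg]
      have hq1 : q 1 = (B 0)⁻¹ := hQ1 0
      refine ⟨by simp [hp0, hq0], ?_, by simp [hp0, hq0, hq1]⟩
      rw [hp1, hq1]
      rw [conjTranspose_neg, conjTranspose_mul, Matrix.conjTranspose_nonsing_inv,
        (hA 0).eq]
      rw [Matrix.mul_neg, Matrix.neg_mul]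
      simp [mul_assoc]
    | succ k ih =>
      obtain ⟨hα, hδ, hγ⟩ := ih
      have hβ : q k * (p (k+1))ᴴ - p k * (q (k+1))ᴴ = -((B k)ᴴ)⁻¹ := by
        have h := congrArg conjTranspose hγ
        rw [conjTranspose_sub, conjTranspose_mul, conjTranspose_mul,
          conjTranspose_conjTranspose, conjTranspose_conjTranspose,
          Matrix.conjTranspose_nonsing_inv] at h
        calc q k * (p (k+1))ᴴ - p k * (q (k+1))ᴴ
            = -((p k) * (q (k+1))ᴴ - (q k) * (p (k+1))ᴴ) := by abel
          _ = -((B k)ᴴ)⁻¹ := by rw [h]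
      -- new γ
      have hγ' : q (k+2) * (p (k+1))ᴴ - p (k+2) * (q (k+1))ᴴ = (B (k+1))⁻¹ := by
        have key : B (k+1) * (q (k+2) * (p (k+1))ᴴ - p (k+2) * (q (k+1))ᴴ) = 1 := by
          calc B (k+1) * (q (k+2) * (p (k+1))ᴴ - p (k+2) * (q (k+1))ᴴ)
              = (B (k+1) * q (k+2)) * (p (k+1))ᴴ
                - (B (k+1) * p (k+2)) * (q (k+1))ᴴ := by noncomm_ring
            _ = (-((B k)ᴴ * q k) - A (k+1) * q (k+1)) * (p (k+1))ᴴ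
                - (-((B k)ᴴ * p k) - A (k+1) * p (k+1)) * (q (k+1))ᴴ := by
                rw [hqrec k, hprec k]
            _ = -((B k)ᴴ * (q k * (p (k+1))ᴴ - p k * (q (k+1))ᴴ))
                - A (k+1) * (q (k+1) * (p (k+1))ᴴ - p (k+1) * (q (k+1))ᴴ) := by
                noncomm_ring
            _ = 1 := by
                rw [hβ, hδ, mul_zero, Matrix.mul_neg, neg_neg, hiBH k, sub_zero]
        calc q (k+2) * (p (k+1))ᴴ - p (k+2) * (q (k+1))ᴴ
            = (B (k+1))⁻¹ * (B (k+1) * (q (k+2) * (p (k+1))ᴴ - p (k+2) * (q (k+1))ᴴ)) := by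
              rw [← mul_assoc, hBi, one_mul]
          _ = (B (k+1))⁻¹ := by rw [key, mul_one]
      -- new δ
      have hδ' : q (k+2) * (p (k+2))ᴴ - p (k+2) * (q (k+2))ᴴ = 0 := by
        have key : B (k+1) * (q (k+2) * (p (k+2))ᴴ - p (k+2) * (q (k+2))ᴴ) * (B (k+1))ᴴ
            = 0 := by
          calc B (k+1) * (q (k+2) * (p (k+2))ᴴ - p (k+2) * (q (k+2))ᴴ) * (B (k+1))ᴴ
              = (B (k+1) * q (k+2)) * (B (k+1) * p (k+2))ᴴ
                - (B (k+1) * p (k+2)) * (B (k+1) * q (k+2))ᴴ := by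
                rw [conjTranspose_mul, conjTranspose_mul]; noncomm_ring
            _ = (-((B k)ᴴ * q k) - A (k+1) * q (k+1))
                  * (-((B k)ᴴ * p k) - A (k+1) * p (k+1))ᴴ
                - (-((B k)ᴴ * p k) - A (k+1) * p (k+1))
                  * (-((B k)ᴴ * q k) - A (k+1) * q (k+1))ᴴ := by
                rw [hqrec k, hprec k]
            _ = (B k)ᴴ * (q k * (p k)ᴴ - p k * (q k)ᴴ) * B k
                + (B k)ᴴ * (q k * (p (k+1))ᴴ - p k * (q (k+1))ᴴ) * A (k+1)
                + A (k+1) * (q (k+1) * (p k)ᴴ - p (k+1) * (q k)ᴴ) * B k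
                + A (k+1) * (q (k+1) * (p (k+1))ᴴ - p (k+1) * (q (k+1))ᴴ) * A (k+1) := by
                simp only [conjTranspose_sub, conjTranspose_neg, conjTranspose_mul,
                  conjTranspose_conjTranspose, (hA (k+1)).eq]
                noncomm_ring
            _ = 0 := by
                rw [hα, hβ, hγ, hδ]
                rw [Matrix.mul_neg, Matrix.neg_mul, hiBH k, mul_zero, zero_mul,
                  mul_zero, zero_mul]
                rw [mul_assoc, hBi k, mul_one]
                simp
        calc q (k+2) * (p (k+2))ᴴ - p (k+2) * (q (k+2))ᴴ
            = ((B (k+1))⁻¹ * B (k+1)) * (q (k+2) * (p (k+2))ᴴ - p (k+2) * (q (k+2))ᴴ)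
                * ((B (k+1))ᴴ * ((B (k+1))ᴴ)⁻¹) := by
              rw [hBi, hiBH, one_mul, mul_one]
          _ = (B (k+1))⁻¹ * (B (k+1) * (q (k+2) * (p (k+2))ᴴ - p (k+2) * (q (k+2))ᴴ)
                * (B (k+1))ᴴ) * ((B (k+1))ᴴ)⁻¹ := by noncomm_ring
          _ = 0 := by rw [key]; simp
      exact ⟨hδ, hδ', hγ'⟩
  -- step lemma
  have step : ∀ j i : ℕ, q (j+2) * (p i)ᴴ - p (j+2) * (q i)ᴴ
      = (B (j+1))⁻¹ * (-((B j)ᴴ * (q j * (p i)ᴴ - p j * (q i)ᴴ))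
          - A (j+1) * (q (j+1) * (p i)ᴴ - p (j+1) * (q i)ᴴ)) := by
    intro j i
    have key : B (j+1) * (q (j+2) * (p i)ᴴ - p (j+2) * (q i)ᴴ)
        = -((B j)ᴴ * (q j * (p i)ᴴ - p j * (q i)ᴴ))
          - A (j+1) * (q (j+1) * (p i)ᴴ - p (j+1) * (q i)ᴴ) := by
      calc B (j+1) * (q (j+2) * (p i)ᴴ - p (j+2) * (q i)ᴴ)
          = (B (j+1) * q (j+2)) * (p i)ᴴ - (B (j+1) * p (j+2)) * (q i)ᴴ := by noncomm_ring
        _ = (-((B j)ᴴ * q j) - A (j+1) * q (j+1)) * (p i)ᴴ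
            - (-((B j)ᴴ * p j) - A (j+1) * p (j+1)) * (q i)ᴴ := by rw [hqrec j, hprec j]
        _ = -((B j)ᴴ * (q j * (p i)ᴴ - p j * (q i)ᴴ))
            - A (j+1) * (q (j+1) * (p i)ᴴ - p (j+1) * (q i)ᴴ) := by noncomm_ring
    calc q (j+2) * (p i)ᴴ - p (j+2) * (q i)ᴴ
        = (B (j+1))⁻¹ * (B (j+1) * (q (j+2) * (p i)ᴴ - p (j+2) * (q i)ᴴ)) := by
          rw [← mul_assoc, hBi, one_mul]
      _ = _ := by rw [key]
  intro n
  obtain ⟨hα, hδ, hγ⟩ := main n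
  have h2 : q (n+2) * (p n)ᴴ - p (n+2) * (q n)ᴴ
      = -((B (n+1))⁻¹ * (A (n+1) * (B n)⁻¹)) := by
    rw [step n n, hα, hγ, mul_zero, neg_zero, zero_sub, Matrix.mul_neg]
  have h3 : q (n+3) * (p n)ᴴ - p (n+3) * (q n)ᴴ
      = (B (n+2))⁻¹ * (-((B (n+1))ᴴ * (B n)⁻¹)
          + A (n+2) * ((B (n+1))⁻¹ * (A (n+1) * (B n)⁻¹))) := by
    have := step (n+1) n
    rw [show n+1+2 = n+3 by ring, show n+1+1 = n+2 by ring] at this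
    rw [this, hγ, h2, Matrix.mul_neg, sub_neg_eq_add]
  have h4 : q (n+4) * (p n)ᴴ - p (n+4) * (q n)ᴴ
      = (B (n+3))⁻¹ * ((B (n+2))ᴴ * ((B (n+1))⁻¹ * (A (n+1) * (B n)⁻¹))
          - A (n+3) * ((B (n+2))⁻¹ * (-((B (n+1))ᴴ * (B n)⁻¹)
              + A (n+2) * ((B (n+1))⁻¹ * (A (n+1) * (B n)⁻¹))))) := by
    have := step (n+2) n
    rw [show n+2+2 = n+4 by ring, show n+2+1 = n+3 by ring] at this
    rw [this, h2, h3, Matrix.mul_neg, neg_neg]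
  have hKval : K (n+4) n = q (n+4) * (p n)ᴴ - p (n+4) * (q n)ᴴ := hK (n+4) n
  rw [hKval, h4]
  noncomm_ring
end

section
/- Let $P_j(z)$ be the matrix polynomials of the first kind for a block Jacobi matrix and let $x\in\mathbb{C}^m$ with $x\ne 0$. Then for every $n\ge 0$, $\frac{1}{\|B_n\|} \le \frac{1}{\|x\|^2}\, \|P_{n+1}(i)x\|\,\|P_n(i)x\|$, where $\|B_n\|$ is the operator norm. Equivalently, $\|x\|^2 \le \|B_n\|\,\|P_{n+1}(i)x\|\,\|P_n(i)x\|$. -/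
open Matrix Finset
open scoped InnerProductSpace

/-- Lower bound `1/‖B_n‖ ≤ ‖x‖⁻² ‖P_{n+1}(i)x‖ ‖P_n(i)x‖` coming from the
Christoffel–Darboux formula at `z = i`. -/
theorem christoffel_darboux_norm_bound
    (m : ℕ) (hm : 1 ≤ m)
    (A B : ℕ → Matrix (Fin m) (Fin m) ℂ)
    (hA : ∀ j, (A j).IsHermitian)
    (hB : ∀ j, IsUnit (B j))
    (P : ℕ → ℂ → Matrix (Fin m) (Fin m) ℂ)
    (hP0 : ∀ z, P 0 z = 1)
    (hP1 : ∀ z, P 1 z = (B 0)⁻¹ * (z • (1 : Matrix (Fin m) (Fin m) ℂ) - A 0))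
    (hPrec : ∀ j : ℕ, ∀ z : ℂ,
      (B j)ᴴ * P j z + A (j + 1) * P (j + 1) z + B (j + 1) * P (j + 2) z
        = z • P (j + 1) z)
    (x : EuclideanSpace ℂ (Fin m)) (hx : x ≠ 0) :
    ∀ n : ℕ,
      1 / ‖Matrix.toEuclideanCLM (𝕜 := ℂ) (B n)‖
        ≤ (1 / ‖x‖ ^ 2)
            * (‖Matrix.toEuclideanCLM (𝕜 := ℂ) (P (n + 1) Complex.I) x‖
                * ‖Matrix.toEuclideanCLM (𝕜 := ℂ) (P n Complex.I) x‖) ∧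
      ‖x‖ ^ 2
        ≤ ‖Matrix.toEuclideanCLM (𝕜 := ℂ) (B n)‖
            * ‖Matrix.toEuclideanCLM (𝕜 := ℂ) (P (n + 1) Complex.I) x‖
            * ‖Matrix.toEuclideanCLM (𝕜 := ℂ) (P n Complex.I) x‖ := by
  -- The Christoffel–Darboux formula at `z = i`.
  have cd : ∀ n : ℕ, (P (n+1) Complex.I)ᴴ * (B n)ᴴ * (P n Complex.I)
        - (P n Complex.I)ᴴ * (B n) * (P (n+1) Complex.I)
      = (-(2*Complex.I)) • ∑ j ∈ Finset.range (n+1),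
          (P j Complex.I)ᴴ * (P j Complex.I) := by
    intro n
    induction n with
    | zero =>
        simp only [Nat.zero_add]
        have hB0 : B 0 * (B 0)⁻¹ = 1 :=
          Matrix.mul_nonsing_inv _ ((Matrix.isUnit_iff_isUnit_det _).mp (hB 0))
        have e1 : B 0 * P 1 Complex.I = Complex.I • 1 - A 0 := by
          rw [hP1, ← mul_assoc, hB0, one_mul]
        have e2 : (P 1 Complex.I)ᴴ * (B 0)ᴴ = (-Complex.I) • 1 - A 0 := by
          have h := congrArg conjTranspose e1
          simpa [conjTranspose_mul, conjTranspose_smul, (hA 0).eq, Complex.conj_I,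
            neg_smul] using h
        simp only [Finset.sum_range_one, hP0, conjTranspose_one, mul_one, one_mul, e1, e2]
        module
    | succ n ih =>
        set p := P n Complex.I
        set q := P (n+1) Complex.I
        set r := P (n+2) Complex.I
        have h1 : B (n+1) * r = Complex.I • q - (B n)ᴴ * p - A (n+1) * q := by
          have h := hPrec n Complex.I
          rw [← h]; abel
        have h2 : rᴴ * (B (n+1))ᴴ = (-Complex.I) • qᴴ - pᴴ * (B n) - qᴴ * A (n+1) := by
          have h := congrArg conjTranspose h1
          simpa [conjTranspose_mul, conjTranspose_smul, conjTranspose_sub,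
            (hA (n+1)).eq, Complex.conj_I, neg_smul, mul_assoc] using h
        rw [Finset.sum_range_succ, smul_add, ← ih, h2, mul_assoc qᴴ, h1]
        simp only [Matrix.sub_mul, Matrix.mul_sub, Matrix.smul_mul, Matrix.mul_smul,
          mul_assoc]
        module
  intro n
  -- abbreviations for the continuous linear maps
  set p' := Matrix.toEuclideanCLM (𝕜 := ℂ) (P n Complex.I) with hp'
  set q' := Matrix.toEuclideanCLM (𝕜 := ℂ) (P (n+1) Complex.I) with hq'
  set b' := Matrix.toEuclideanCLM (𝕜 := ℂ) (B n) with hb'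
  -- the two expressions for the inner product ⟪x, Φ(D) x⟫
  have hc1 : ⟪x, (Matrix.toEuclideanCLM (𝕜 := ℂ)
        ((P (n+1) Complex.I)ᴴ * (B n)ᴴ * (P n Complex.I)
          - (P n Complex.I)ᴴ * (B n) * (P (n+1) Complex.I))) x⟫_ℂ
      = ⟪b' (q' x), p' x⟫_ℂ - ⟪p' x, b' (q' x)⟫_ℂ := by
    simp [hp', hq', hb', map_sub, _root_.map_mul, ← Matrix.star_eq_conjTranspose, map_star,
      ContinuousLinearMap.star_eq_adjoint, ContinuousLinearMap.mul_apply,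
      inner_sub_right, ContinuousLinearMap.adjoint_inner_right]
  set s : ℝ := ∑ j ∈ Finset.range (n+1),
      ‖(Matrix.toEuclideanCLM (𝕜 := ℂ) (P j Complex.I)) x‖^2 with hs
  have hc2 : ⟪x, (Matrix.toEuclideanCLM (𝕜 := ℂ)
        ((-(2*Complex.I)) • ∑ j ∈ Finset.range (n+1),
          (P j Complex.I)ᴴ * (P j Complex.I))) x⟫_ℂ
      = (-(2*Complex.I)) * (s : ℂ) := by
    simp [hs, _root_.map_smul, map_sum, _root_.map_mul, ← Matrix.star_eq_conjTranspose,
      map_star, ContinuousLinearMap.star_eq_adjoint, ContinuousLinearMap.mul_apply,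
      ContinuousLinearMap.smul_apply, inner_smul_right, ContinuousLinearMap.sum_apply,
      inner_sum, ContinuousLinearMap.adjoint_inner_right, inner_self_eq_norm_sq_to_K]
  have hceq : ⟪b' (q' x), p' x⟫_ℂ - ⟪p' x, b' (q' x)⟫_ℂ = (-(2*Complex.I)) * (s : ℂ) := by
    rw [← hc1, ← hc2, cd n]
  -- `s ≥ ‖x‖²`
  have hterm0 : ‖(Matrix.toEuclideanCLM (𝕜 := ℂ) (P 0 Complex.I)) x‖^2 = ‖x‖^2 := by
    rw [hP0]; simp
  have hsx : ‖x‖^2 ≤ s := by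
    rw [hs, ← hterm0]
    exact Finset.single_le_sum (f := fun j => ‖(Matrix.toEuclideanCLM (𝕜 := ℂ)
      (P j Complex.I)) x‖^2) (fun j _ => by positivity) (Finset.mem_range.mpr (by omega))
  have hs0 : 0 ≤ s := le_trans (by positivity) hsx
  -- norm of the right-hand side
  have hnorm_rhs : ‖(-(2*Complex.I)) * (s : ℂ)‖ = 2 * s := by
    simp [abs_of_nonneg hs0]
  -- norm of the left-hand side
  have hw : ‖⟪b' (q' x), p' x⟫_ℂ‖ ≤ ‖b'‖ * ‖q' x‖ * ‖p' x‖ := by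
    calc ‖⟪b' (q' x), p' x⟫_ℂ‖ ≤ ‖b' (q' x)‖ * ‖p' x‖ := norm_inner_le_norm _ _
      _ ≤ (‖b'‖ * ‖q' x‖) * ‖p' x‖ :=
        mul_le_mul_of_nonneg_right (b'.le_opNorm _) (norm_nonneg _)
      _ = ‖b'‖ * ‖q' x‖ * ‖p' x‖ := by ring
  have hw2 : ‖⟪p' x, b' (q' x)⟫_ℂ‖ = ‖⟪b' (q' x), p' x⟫_ℂ‖ := norm_inner_symm _ _
  have hkey : ‖x‖^2 ≤ ‖b'‖ * ‖q' x‖ * ‖p' x‖ := by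
    have h2s : 2 * s ≤ 2 * (‖b'‖ * ‖q' x‖ * ‖p' x‖) := by
      calc 2 * s = ‖⟪b' (q' x), p' x⟫_ℂ - ⟪p' x, b' (q' x)⟫_ℂ‖ := by rw [hceq, hnorm_rhs]
        _ ≤ ‖⟪b' (q' x), p' x⟫_ℂ‖ + ‖⟪p' x, b' (q' x)⟫_ℂ‖ := norm_sub_le _ _
        _ = 2 * ‖⟪b' (q' x), p' x⟫_ℂ‖ := by rw [hw2]; ring
        _ ≤ 2 * (‖b'‖ * ‖q' x‖ * ‖p' x‖) := by linarith [hw]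
    linarith [hsx]
  -- positivity facts
  have hx2 : (0:ℝ) < ‖x‖^2 := by
    have : ‖x‖ ≠ 0 := norm_ne_zero_iff.mpr hx
    positivity
  have hbpos : (0:ℝ) < ‖b'‖ := by
    have hne : Nonempty (Fin m) := ⟨⟨0, hm⟩⟩
    have hBn : B n ≠ 0 := (hB n).ne_zero
    have : b' ≠ 0 := by
      intro h
      apply hBn
      have h0 : Matrix.toEuclideanCLM (𝕜 := ℂ) (B n)
          = Matrix.toEuclideanCLM (𝕜 := ℂ) (0 : Matrix (Fin m) (Fin m) ℂ) := by
        rw [← hb', h, map_zero]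
      exact (Matrix.toEuclideanCLM (𝕜 := ℂ) (n := Fin m)).injective h0
    exact norm_pos_iff.mpr this
  refine ⟨?_, ?_⟩
  · rw [div_le_iff₀ hbpos,
      show (1 / ‖x‖^2) * (‖q' x‖ * ‖p' x‖) * ‖b'‖ = (‖b'‖ * ‖q' x‖ * ‖p' x‖) / ‖x‖^2 by
        ring, le_div_iff₀ hx2, one_mul]
    exact hkey
  · exact hkey
end

section
/- Let $a,b,\alpha\in\mathbb{R}$ with $a\ne 0$, $b>0$, $\alpha>1$, and suppose $a_n \sim (-1)^n a n^{\alpha}$ and $b_n \sim b n^{\alpha}$ as $n\to\infty$ (i.e. $a_n/((-1)^n a n^{\alpha}) \to 1$ and $b_n/(b n^{\alpha}) \to 1$). Then $\lim_{n\to\infty} \frac{b_{n-1}b_{n-2} + |a_{n-1}+a_n|\,b_{n-1} + |a_n+a_{n+1}|\,b_n + b_n b_{n+1}}{b_{n-1}^2 + a_n^2 + b_n^2} = \frac{2b^2}{a^2 + 2b^2}$, which is strictly less than $1$. -/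
open Filter Topology

/-!
After dividing numerator and denominator by `n ^ (2α)`, every shifted `b_{n+k} / n ^ α` tends to
`b` and `(-1)^n a_n / n ^ α` tends to `a`. Because the signs alternate, `a_n + a_{n+1}` is, up to
the sign `(-1)^n`, the difference of two sequences with the same limit `a`, so the cross terms
`|a_n + a_{n+1}| b_n` are negligible: the numerator tends to `2b²` and the denominator to
`a² + 2b²`.
-/

lemma div_neg_one_pow_mul {K : Type*} [Field K] (n : ℕ) (x y : K) :
    x / ((-1) ^ n * y) = (-1) ^ n * x / y := by
  rw [← div_div, div_eq_mul_inv x, ← inv_pow, inv_neg_one, mul_comm, mul_div_assoc]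

lemma tendsto_div_of_tendsto_div_of_tendsto_div {ι : Type*} {l : Filter ι} {f g w : ι → ℝ}
    {x y : ℝ} (hf : Tendsto (fun i => f i / w i) l (𝓝 x))
    (hg : Tendsto (fun i => g i / w i) l (𝓝 y)) (hy : y ≠ 0) (hw : ∀ᶠ i in l, w i ≠ 0) :
    Tendsto (fun i => f i / g i) l (𝓝 (x / y)) :=
  (hf.div hg hy).congr' <| hw.mono fun _ hi => div_div_div_cancel_right₀ hi _ _

lemma tendsto_div_of_tendsto_div_const_mul {ι : Type*} {l : Filter ι} {f w : ι → ℝ} {c : ℝ}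
    (hc : c ≠ 0) (h : Tendsto (fun i => f i / (c * w i)) l (𝓝 1)) :
    Tendsto (fun i => f i / w i) l (𝓝 c) := by
  simpa [mul_div_assoc', mul_div_mul_left _ _ hc] using h.const_mul c

lemma tendsto_comp_div_rpow_of_eventually_eq_add {f : ℕ → ℝ} {g : ℕ → ℕ} {L α c : ℝ}
    (hg : ∀ᶠ n in atTop, (g n : ℝ) = n + c)
    (hf : Tendsto (fun n => f n / (n : ℝ) ^ α) atTop (𝓝 L)) :
    Tendsto (fun n => f (g n) / (n : ℝ) ^ α) atTop (𝓝 L) := by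
  have hg_atTop : Tendsto g atTop atTop := by
    refine (tendsto_natCast_atTop_iff (R := ℝ)).mp ?_
    exact (tendsto_atTop_add_const_right _ c tendsto_natCast_atTop_atTop).congr'
      (hg.mono fun n hn => hn.symm)
  have hratio : Tendsto (fun n => ((g n : ℝ) / n) ^ α) atTop (𝓝 1) := by
    have h : Tendsto (fun n : ℕ => (c + n) / n) atTop (𝓝 1) := by
      simpa using tendsto_add_mul_div_add_mul_atTop_nhds c 0 (1 : ℝ) one_ne_zero
    have h' : Tendsto (fun n => (g n : ℝ) / n) atTop (𝓝 1) :=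
      h.congr' <| hg.mono fun n hn => by simp only [hn, add_comm]
    simpa using h'.rpow_const (Or.inl one_ne_zero)
  simpa using ((hf.comp hg_atTop).mul hratio).congr' <| by
    filter_upwards [hg_atTop.eventually_ge_atTop 1, eventually_ge_atTop 1] with n hgn hn
    have hgn' : (g n : ℝ) ^ α ≠ 0 := (Real.rpow_pos_of_pos (by exact_mod_cast hgn) α).ne'
    rw [Function.comp_apply, Real.div_rpow (Nat.cast_nonneg _) (Nat.cast_nonneg _)]
    field_simp

lemma tendsto_sub_div_rpow {f : ℕ → ℝ} {L α : ℝ} (k : ℕ)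
    (hf : Tendsto (fun n => f n / (n : ℝ) ^ α) atTop (𝓝 L)) :
    Tendsto (fun n => f (n - k) / (n : ℝ) ^ α) atTop (𝓝 L) :=
  tendsto_comp_div_rpow_of_eventually_eq_add (c := -k)
    (by filter_upwards [eventually_ge_atTop k] with n hn; rw [Nat.cast_sub hn]; ring) hf

lemma tendsto_succ_div_rpow {f : ℕ → ℝ} {L α : ℝ}
    (hf : Tendsto (fun n => f n / (n : ℝ) ^ α) atTop (𝓝 L)) :
    Tendsto (fun n => f (n + 1) / (n : ℝ) ^ α) atTop (𝓝 L) :=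
  tendsto_comp_div_rpow_of_eventually_eq_add (c := 1) (.of_forall fun n => Nat.cast_succ n) hf

lemma tendsto_abs_add_succ_div_rpow {s : ℕ → ℝ} {a α : ℝ}
    (hs : Tendsto (fun n => (-1) ^ n * s n / (n : ℝ) ^ α) atTop (𝓝 a)) :
    Tendsto (fun n => |s n + s (n + 1)| / (n : ℝ) ^ α) atTop (𝓝 0) := by
  simpa using (hs.sub (tendsto_succ_div_rpow hs)).abs.congr fun n => by
    rw [← sub_div, abs_div, abs_of_nonneg (Real.rpow_nonneg n.cast_nonneg α), pow_succ,
      show (-1) ^ n * s n - (-1) ^ n * -1 * s (n + 1) = (-1) ^ n * (s n + s (n + 1)) by ring,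
      abs_mul, abs_pow, abs_neg, abs_one, one_pow, one_mul]

theorem jacobi_quotient_limit_general
    (a b α : ℝ) (ha : a ≠ 0) (hb : 0 < b)
    (an bn : ℕ → ℝ)
    (han : Tendsto (fun n : ℕ => an n / ((-1 : ℝ) ^ n * a * (n : ℝ) ^ α))
      atTop (𝓝 1))
    (hbn' : Tendsto (fun n : ℕ => bn n / (b * (n : ℝ) ^ α)) atTop (𝓝 1)) :
    Tendsto (fun n : ℕ =>
        (bn (n - 1) * bn (n - 2) + |an (n - 1) + an n| * bn (n - 1)
            + |an n + an (n + 1)| * bn n + bn n * bn (n + 1))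
          / (bn (n - 1) ^ 2 + an n ^ 2 + bn n ^ 2))
      atTop (𝓝 (2 * b ^ 2 / (a ^ 2 + 2 * b ^ 2))) ∧
    2 * b ^ 2 / (a ^ 2 + 2 * b ^ 2) < 1 := by
  have hA : Tendsto (fun n => (-1) ^ n * an n / (n : ℝ) ^ α) atTop (𝓝 a) :=
    tendsto_div_of_tendsto_div_const_mul ha <| by
      simpa only [mul_assoc, div_neg_one_pow_mul] using han
  have hB : Tendsto (fun n => bn n / (n : ℝ) ^ α) atTop (𝓝 b) :=
    tendsto_div_of_tendsto_div_const_mul hb.ne' hbn'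
  have hS := tendsto_abs_add_succ_div_rpow hA
  have hS' : Tendsto (fun n => |an (n - 1) + an n| / (n : ℝ) ^ α) atTop (𝓝 0) :=
    (tendsto_sub_div_rpow 1 hS).congr' <| by
      filter_upwards [eventually_ge_atTop 1] with n hn
      rw [Nat.sub_add_cancel hn]
  have hnum : Tendsto (fun n : ℕ =>
      (bn (n - 1) * bn (n - 2) + |an (n - 1) + an n| * bn (n - 1)
        + |an n + an (n + 1)| * bn n + bn n * bn (n + 1)) / ((n : ℝ) ^ α) ^ 2)
      atTop (𝓝 (2 * b ^ 2)) := by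
    convert (((tendsto_sub_div_rpow 1 hB).mul (tendsto_sub_div_rpow 2 hB)).add
      (hS'.mul (tendsto_sub_div_rpow 1 hB))).add (hS.mul hB)
      |>.add (hB.mul (tendsto_succ_div_rpow hB)) using 1
    · ext n
      ring
    · congr 1; ring
  have hden : Tendsto (fun n : ℕ => (bn (n - 1) ^ 2 + an n ^ 2 + bn n ^ 2) / ((n : ℝ) ^ α) ^ 2)
      atTop (𝓝 (a ^ 2 + 2 * b ^ 2)) := by
    have hA₂ : Tendsto (fun n => an n ^ 2 / ((n : ℝ) ^ α) ^ 2) atTop (𝓝 (a ^ 2)) := by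
      simpa [div_pow, mul_pow, ← pow_mul] using hA.pow 2
    convert ((tendsto_sub_div_rpow 1 hB).pow 2).add hA₂ |>.add (hB.pow 2) using 1
    · ext n
      ring
    · congr 1; ring
  have hpos : 0 < a ^ 2 + 2 * b ^ 2 := by positivity
  refine ⟨tendsto_div_of_tendsto_div_of_tendsto_div hnum hden hpos.ne' ?_,
    (div_lt_one hpos).mpr (lt_add_of_pos_left _ (by positivity))⟩
  filter_upwards [eventually_gt_atTop 0] with n hn
  have : (0 : ℝ) < n := by exact_mod_cast hn
  positivity

/-- For `a_n ~ (-1)^n a n^α` and `b_n ~ b n^α` with `a ≠ 0`, `b > 0`, `α > 1`,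
the quotient in the self-adjointness criterion converges to `2b²/(a²+2b²) < 1`. -/
theorem jacobi_quotient_limit
    (a b α : ℝ) (ha : a ≠ 0) (hb : 0 < b) (hα : 1 < α)
    (an bn : ℕ → ℝ) (hbn : ∀ n, 0 < bn n)
    (han : Tendsto (fun n : ℕ => an n / ((-1 : ℝ) ^ n * a * (n : ℝ) ^ α))
      atTop (𝓝 1))
    (hbn' : Tendsto (fun n : ℕ => bn n / (b * (n : ℝ) ^ α)) atTop (𝓝 1)) :
    Tendsto (fun n : ℕ =>
        (bn (n - 1) * bn (n - 2) + |an (n - 1) + an n| * bn (n - 1)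
            + |an n + an (n + 1)| * bn n + bn n * bn (n + 1))
          / (bn (n - 1) ^ 2 + an n ^ 2 + bn n ^ 2))
      atTop (𝓝 (2 * b ^ 2 / (a ^ 2 + 2 * b ^ 2))) ∧
    2 * b ^ 2 / (a ^ 2 + 2 * b ^ 2) < 1 :=
  jacobi_quotient_limit_general a b α ha hb an bn han hbn'
end

section
/- Let $m\ge 1$ and $1\le p \le m-1$, and let $J_p$ be the infinite band matrix with entries $c'_{j,j+p}=c'_{j+p,j}=(j+1)^2$ for $j\ge 0$ and all other entries zero. Then every solution of the homogeneous system $(J_p u)_j = 0$ for $j \ge 1$, i.e. $\sum_l c'_{jl}u_l = 0$ for all $j\ge 1$, is square-summable: $\sum_{j=0}^{\infty} |u_j|^2 < \infty$. -/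
/-- Every solution of the homogeneous system for the band matrix `J_p` with entries
`c'_{j,j+p} = c'_{j+p,j} = (j+1)²` is square-summable. -/
theorem band_matrix_solutions_square_summable
    (m p : ℕ) (hm : 1 ≤ m) (hp : 1 ≤ p) (hpm : p ≤ m - 1)
    (u : ℕ → ℂ)
    (h1 : ∀ j : ℕ, p ≤ j →
      ((j - p + 1 : ℕ) : ℂ) ^ 2 * u (j - p) + ((j + 1 : ℕ) : ℂ) ^ 2 * u (j + p) = 0)
    (h2 : ∀ j : ℕ, 1 ≤ j → j < p → ((j + 1 : ℕ) : ℂ) ^ 2 * u (j + p) = 0) :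
    Summable (fun j : ℕ => ‖u j‖ ^ 2) := by
  set v : ℕ → ℝ := fun n => ‖u n‖ ^ 2 * ((n : ℝ) + 1) ^ 2 with hv
  have hvnonneg : ∀ n, 0 ≤ v n := by
    intro n
    positivity
  -- key step inequality
  have key : ∀ n : ℕ, v (n + 2 * p) ≤ v n := by
    intro n
    have h := h1 (n + p) (by omega)
    have e1 : n + p - p = n := by omega
    have e2 : n + p + p = n + 2 * p := by omega
    rw [e1, e2] at h
    have heq : ((n + p + 1 : ℕ) : ℂ) ^ 2 * u (n + 2 * p)
        = -(((n + 1 : ℕ) : ℂ) ^ 2 * u n) := by linear_combination h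
    have habs := congrArg (‖·‖) heq
    simp only [norm_neg, norm_mul, norm_pow, Complex.norm_natCast] at habs
    push_cast at habs
    -- habs : (n+p+1)^2 * |u(n+2p)| = (n+1)^2 * |u n|
    have hAM : ((n : ℝ) + 1) * ((n : ℝ) + 2 * p + 1) ≤ ((n : ℝ) + p + 1) ^ 2 := by
      nlinarith [sq_nonneg ((p : ℝ))]
    have hAM2 : (((n : ℝ) + 1) * ((n : ℝ) + 2 * p + 1)) * (((n : ℝ) + 1) * ((n : ℝ) + 2 * p + 1))
        ≤ ((n : ℝ) + p + 1) ^ 2 * ((n : ℝ) + p + 1) ^ 2 :=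
      mul_self_le_mul_self (by positivity) hAM
    have hcpos : (0 : ℝ) < ((n : ℝ) + p + 1) ^ 2 := by positivity
    have hA : (0 : ℝ) ≤ ‖u (n + 2 * p)‖ := norm_nonneg _
    have hB : (0 : ℝ) ≤ ‖u n‖ := norm_nonneg _
    simp only [hv]
    push_cast
    have hsq : (((n : ℝ) + p + 1) ^ 2 * ‖u (n + 2 * p)‖)
        * (((n : ℝ) + p + 1) ^ 2 * ‖u (n + 2 * p)‖)
        = (((n : ℝ) + 1) ^ 2 * ‖u n‖) * (((n : ℝ) + 1) ^ 2 * ‖u n‖) := by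
      rw [habs]
    set A := ‖u (n + 2 * p)‖ with hA'
    set B := ‖u n‖ with hB'
    set a : ℝ := (n : ℝ) + 1 with ha'
    set c : ℝ := (n : ℝ) + p + 1 with hc'
    set d : ℝ := (n : ℝ) + 2 * p + 1 with hd'
    apply le_of_mul_le_mul_right _ (mul_pos hcpos hcpos)
    calc A ^ 2 * d ^ 2 * (c ^ 2 * c ^ 2)
        = (c ^ 2 * A * (c ^ 2 * A)) * d ^ 2 := by ring
      _ = (a ^ 2 * B * (a ^ 2 * B)) * d ^ 2 := by rw [hsq]
      _ = (B ^ 2 * a ^ 2) * ((a * d) * (a * d)) := by ring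
      _ ≤ (B ^ 2 * a ^ 2) * (c ^ 2 * c ^ 2) :=
          mul_le_mul_of_nonneg_left hAM2 (by positivity)
      _ = B ^ 2 * a ^ 2 * (c ^ 2 * c ^ 2) := by ring
  -- bound: v n ≤ M for all n
  set M : ℝ := ∑ k ∈ Finset.range (2 * p), v k with hM
  have hbound : ∀ n, v n ≤ M := by
    intro n
    induction n using Nat.strong_induction_on with
    | _ n ih =>
      by_cases hn : n < 2 * p
      · exact Finset.single_le_sum (fun k _ => hvnonneg k) (Finset.mem_range.mpr hn)
      · have e : n - 2 * p + 2 * p = n := by omega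
        calc v n = v (n - 2 * p + 2 * p) := by rw [e]
        _ ≤ v (n - 2 * p) := key _
        _ ≤ M := ih _ (by omega)
  -- comparison with 1/(n+1)^2
  have hsum : Summable (fun n : ℕ => M * (1 / ((n : ℝ) + 1) ^ 2)) := by
    apply Summable.mul_left
    have : Summable (fun n : ℕ => 1 / ((n : ℝ)) ^ 2) :=
      Real.summable_one_div_nat_pow.mpr (by norm_num)
    have : Summable (fun n : ℕ => 1 / ((n + 1 : ℕ) : ℝ) ^ 2) := (summable_nat_add_iff 1).mpr this
    exact this.congr (fun n => by rw [Nat.cast_add, Nat.cast_one])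
  apply Summable.of_nonneg_of_le (fun n => by positivity) _ hsum
  intro n
  have h := hbound n
  simp only [hv] at h
  have hpos : (0 : ℝ) < ((n : ℝ) + 1) ^ 2 := by positivity
  rw [mul_one_div, le_div_iff₀ hpos]
  exact h
end
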